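/- Both P_{k+1}(K̂) and Q_k(K̂) are contained in div ABF_k(K̂). -/

import Mathlib

/-!
Integrating termwise in `x` maps `Q_{k+1,k}` into `Q_{k+2,k}`, and integrating in `y` maps
`Q_{k,k+1}` into `Q_{k,k+2}`, so `Q_{k+1,k} + Q_{k,k+1} ⊆ div ABF_k`. This sum contains `Q_k`,
and it contains `P_{k+1}`: the only monomial of total degree `≤ k + 1` with `y`-degree `> k` is
`y^{k+1}`, which lies in `Q_{k,k+1}`, and everything else lies in `Q_{k+1,k}`.
-/

open MvPolynomial

noncomputable section

/-- Polynomials over the reference square with degree ≤ p in x and ≤ q in y. -/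
def Qset (p q : ℕ) : Set (MvPolynomial (Fin 2) ℝ) :=
  {f | f.degreeOf 0 ≤ p ∧ f.degreeOf 1 ≤ q}

/-- Polynomials of total degree ≤ k. -/
def Pset (k : ℕ) : Set (MvPolynomial (Fin 2) ℝ) :=
  {f | f.totalDegree ≤ k}

/-- Divergence of a polynomial vector field. -/
def pdiv (v : MvPolynomial (Fin 2) ℝ × MvPolynomial (Fin 2) ℝ) : MvPolynomial (Fin 2) ℝ :=
  pderiv 0 v.1 + pderiv 1 v.2

/-- Curl of a scalar polynomial. -/
def pcurl (f : MvPolynomial (Fin 2) ℝ) :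
    MvPolynomial (Fin 2) ℝ × MvPolynomial (Fin 2) ℝ :=
  (pderiv 1 f, -(pderiv 0 f))

/-- The Raviart–Thomas space RT_k = Q_{k+1,k} × Q_{k,k+1}. -/
def RTset (k : ℕ) : Set (MvPolynomial (Fin 2) ℝ × MvPolynomial (Fin 2) ℝ) :=
  (Qset (k + 1) k) ×ˢ (Qset k (k + 1))

/-- The Arnold–Boffi–Falk space ABF_k = Q_{k+2,k} × Q_{k,k+2}. -/
def ABFset (k : ℕ) : Set (MvPolynomial (Fin 2) ℝ × MvPolynomial (Fin 2) ℝ) :=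
  (Qset (k + 2) k) ×ˢ (Qset k (k + 2))

open scoped Pointwise

namespace MvPolynomial

section Antideriv

variable {σ K : Type*} [Field K]

def antideriv (i : σ) (f : MvPolynomial σ K) : MvPolynomial σ K :=
  ∑ d ∈ f.support, monomial (d + Finsupp.single i 1) (coeff d f / (d i + 1))

theorem pderiv_antideriv [CharZero K] (i : σ) (f : MvPolynomial σ K) :
    pderiv i (antideriv i f) = f := by
  conv_rhs => rw [f.as_sum]
  refine (map_sum _ _ _).trans (Finset.sum_congr rfl fun d _ => ?_)
  have hd : (d i : K) + 1 ≠ 0 := Nat.cast_add_one_ne_zero _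
  simp [pderiv_monomial, div_mul_cancel₀ _ hd]

theorem degreeOf_antideriv_le (i j : σ) (f : MvPolynomial σ K) :
    degreeOf j (antideriv i f) ≤ degreeOf j f + Finsupp.single i 1 j := by
  classical
  refine degreeOf_le_iff.mpr fun m hm => ?_
  obtain ⟨d, hd, hm⟩ := Finset.mem_biUnion.mp (support_sum hm)
  rw [Finset.mem_singleton.mp (support_monomial_subset hm), Finsupp.add_apply]
  exact Nat.add_le_add_right (monomial_le_degreeOf j hd) _

theorem degreeOf_antideriv_self_le (i : σ) (f : MvPolynomial σ K) :
    degreeOf i (antideriv i f) ≤ degreeOf i f + 1 := by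
  simpa using degreeOf_antideriv_le i i f

theorem degreeOf_antideriv_le_of_ne {i j : σ} (h : j ≠ i) (f : MvPolynomial σ K) :
    degreeOf j (antideriv i f) ≤ degreeOf j f := by
  simpa [Finsupp.single_eq_of_ne h] using degreeOf_antideriv_le i j f

end Antideriv

theorem support_sub_monomial_coeff_subset {σ R : Type*} [CommRing R] [DecidableEq σ]
    (p : MvPolynomial σ R) (s : σ →₀ ℕ) :
    (p - monomial s (coeff s p)).support ⊆ p.support.erase s := by
  intro d hd
  rw [mem_support_iff, coeff_sub, coeff_monomial] at hd
  split_ifs at hd with h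
  · exact absurd (h ▸ sub_self _) hd
  · exact Finset.mem_erase.mpr ⟨Ne.symm h, mem_support_iff.mpr (by simpa using hd)⟩

end MvPolynomial

theorem Qset_mono {p p' q q' : ℕ} (hp : p ≤ p') (hq : q ≤ q') : Qset p q ⊆ Qset p' q' :=
  fun _ hf => ⟨hf.1.trans hp, hf.2.trans hq⟩

theorem zero_mem_Qset (p q : ℕ) : (0 : MvPolynomial (Fin 2) ℝ) ∈ Qset p q := by
  simp [Qset, degreeOf_zero]

theorem Qset_subset_image_pderiv_zero (p q : ℕ) : Qset p q ⊆ pderiv 0 '' Qset (p + 1) q :=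
  fun f hf => ⟨antideriv 0 f,
    ⟨(degreeOf_antideriv_self_le 0 f).trans (Nat.add_le_add_right hf.1 1),
      (degreeOf_antideriv_le_of_ne one_ne_zero f).trans hf.2⟩, pderiv_antideriv 0 f⟩

theorem Qset_subset_image_pderiv_one (p q : ℕ) : Qset p q ⊆ pderiv 1 '' Qset p (q + 1) :=
  fun f hf => ⟨antideriv 1 f,
    ⟨(degreeOf_antideriv_le_of_ne zero_ne_one f).trans hf.1,
      (degreeOf_antideriv_self_le 1 f).trans (Nat.add_le_add_right hf.2 1)⟩,
    pderiv_antideriv 1 f⟩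

theorem Qset_add_Qset_subset_image_pdiv (k : ℕ) :
    Qset (k + 1) k + Qset k (k + 1) ⊆ pdiv '' ABFset k := by
  rintro _ ⟨f₁, hf₁, f₂, hf₂, rfl⟩
  obtain ⟨g₁, hg₁, rfl⟩ := Qset_subset_image_pderiv_zero _ _ hf₁
  obtain ⟨g₂, hg₂, rfl⟩ := Qset_subset_image_pderiv_one _ _ hf₂
  exact ⟨(g₁, g₂), ⟨hg₁, hg₂⟩, rfl⟩

theorem Pset_succ_subset_Qset_add_Qset (k : ℕ) :
    Pset (k + 1) ⊆ Qset (k + 1) k + Qset k (k + 1) := by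
  intro f hf
  set s : Fin 2 →₀ ℕ := Finsupp.single 1 (k + 1)
  have hdeg : ∀ d ∈ f.support, d 0 + d 1 ≤ k + 1 := fun d hd => by
    simpa [Finsupp.sum_fintype, Fin.sum_univ_two] using (le_totalDegree hd).trans hf
  refine ⟨f - monomial s (coeff s f), ⟨?_, ?_⟩, monomial s (coeff s f), ⟨?_, ?_⟩,
    sub_add_cancel _ _⟩
  · refine degreeOf_le_iff.mpr fun d hd => ?_
    have := hdeg d (Finset.mem_of_mem_erase (support_sub_monomial_coeff_subset f s hd))
    omega
  · refine degreeOf_le_iff.mpr fun d hd => ?_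
    obtain ⟨hds, hdf⟩ := Finset.mem_erase.mp (support_sub_monomial_coeff_subset f s hd)
    have := hdeg d hdf
    by_contra! h
    exact hds (Finsupp.ext fun i => by fin_cases i <;> simp [s] <;> omega)
  all_goals
    refine degreeOf_le_iff.mpr fun m hm => ?_
    simp [Finset.mem_singleton.mp (support_monomial_subset hm), s]

/-- P_{k+1}(K̂) ⊆ div ABF_k(K̂) and Q_k(K̂) ⊆ div ABF_k(K̂). -/
theorem P_and_Q_subset_div_ABF (k : ℕ) :
    Pset (k + 1) ⊆ pdiv '' ABFset k ∧ Qset k k ⊆ pdiv '' ABFset k := by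
  have hQ_add_Q := Qset_add_Qset_subset_image_pdiv k
  refine ⟨(Pset_succ_subset_Qset_add_Qset k).trans hQ_add_Q, ?_⟩
  calc Qset k k ⊆ Qset (k + 1) k := Qset_mono k.le_succ le_rfl
    _ ⊆ Qset (k + 1) k + Qset k (k + 1) := Set.subset_add_left _ (zero_mem_Qset k (k + 1))
    _ ⊆ pdiv '' ABFset k := hQ_add_Q
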